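/- In the Schwarzschild space-time with coordinates (t,r,θ,φ) on r > 2m, the lightlike 3-distributions Ω± = span(±∂_t + a_S ∂_r, ∂_θ, ∂_φ), where a_S = 1 − 2m/r, are stable with respect to span(∂_t): ∇_{∂_t} X ∈ Ω± for every vector field X taking values in Ω±. -/

import Mathlib

open scoped BigOperators

/-- Partial derivative `∂f/∂x^j` at `p`. -/
noncomputable def pd {n : ℕ} (f : (Fin n → ℝ) → ℝ) (j : Fin n) (p : Fin n → ℝ) : ℝ :=
  fderiv ℝ f p (Pi.single j 1)

/-- Christoffel symbols `Γ^i_{jk}` of the Levi-Civita connection of the metric `G`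
(given as a matrix-valued function of the coordinates):
`Γ^i_{jk} = (1/2) g^{il} (∂_j g_{lk} + ∂_k g_{jl} − ∂_l g_{jk})`. -/
noncomputable def christoffel {n : ℕ} (G : (Fin n → ℝ) → Matrix (Fin n) (Fin n) ℝ)
    (p : Fin n → ℝ) (i j k : Fin n) : ℝ :=
  (1 / 2) * ∑ l, (G p)⁻¹ i l *
    (pd (fun q => G q l k) j p + pd (fun q => G q j l) k p - pd (fun q => G q j k) l p)

/-- Covariant derivative `∇_Y X` at `p`, in coordinates, for the connection with
Christoffel symbols `Γ`: `(∇_Y X)^i = Y^j ∂_j X^i + Γ^i_{jk} Y^j X^k`. -/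
noncomputable def covDeriv {n : ℕ} (Γ : (Fin n → ℝ) → Fin n → Fin n → Fin n → ℝ)
    (Y X : (Fin n → ℝ) → Fin n → ℝ) (p : Fin n → ℝ) : Fin n → ℝ :=
  fun i => fderiv ℝ (fun q => X q i) p (Y p) + ∑ j, ∑ k, Γ p i j k * Y p j * X p k

/-- The Riemann curvature operator `R(Y,Z)X` at `p` applied to tangent vectors,
in coordinates: `(R(Y,Z)X)^i = R^i_{jkl} Y^k Z^l X^j` with
`R^i_{jkl} = ∂_k Γ^i_{lj} − ∂_l Γ^i_{kj} + Γ^i_{km}Γ^m_{lj} − Γ^i_{lm}Γ^m_{kj}`. -/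
noncomputable def riemann {n : ℕ} (Γ : (Fin n → ℝ) → Fin n → Fin n → Fin n → ℝ)
    (p : Fin n → ℝ) (Y Z X : Fin n → ℝ) : Fin n → ℝ :=
  fun i => ∑ j, ∑ k, ∑ l,
    (pd (fun q => Γ q i l j) k p - pd (fun q => Γ q i k j) l p
      + ∑ m, (Γ p i k m * Γ p m l j - Γ p i l m * Γ p m k j)) * Y k * Z l * X j

/-- The Schwarzschild metric in coordinates `(t,r,θ,φ) = (p 0, p 1, p 2, p 3)`:
`ds² = a_S⁻¹ dr² + r²(dθ² + sin²θ dφ²) − a_S dt²` with `a_S = 1 − 2m/r`. -/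
noncomputable def schwMetric (m : ℝ) (p : Fin 4 → ℝ) : Matrix (Fin 4) (Fin 4) ℝ :=
  Matrix.diagonal ![-(1 - 2 * m / p 1), (1 - 2 * m / p 1)⁻¹,
    (p 1) ^ 2, (p 1) ^ 2 * Real.sin (p 2) ^ 2]

lemma pd_comp (f : ℝ → ℝ) (c : ℝ) (i j : Fin 4) (p : Fin 4 → ℝ) (hf : HasDerivAt f c (p i)) :
    pd (fun q => f (q i)) j p = if j = i then c else 0 := by
  have hproj : HasFDerivAt (fun q : Fin 4 → ℝ => q i)
      (ContinuousLinearMap.proj i : (Fin 4 → ℝ) →L[ℝ] ℝ) p :=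
    (ContinuousLinearMap.proj i : (Fin 4 → ℝ) →L[ℝ] ℝ).hasFDerivAt
  have h : HasFDerivAt (fun q : Fin 4 → ℝ => f (q i))
      (c • (ContinuousLinearMap.proj i : (Fin 4 → ℝ) →L[ℝ] ℝ)) p :=
    hf.comp_hasFDerivAt p hproj
  rw [pd, h.fderiv]
  by_cases h' : j = i
  · subst h'; simp
  · simp [Pi.single_apply, h', Ne.symm h']

lemma pd_const (c : ℝ) (j : Fin 4) (p : Fin 4 → ℝ) : pd (fun _ => c) j p = 0 := by
  simp [pd]

lemma covDeriv_e0 (Γ : (Fin 4 → ℝ) → Fin 4 → Fin 4 → Fin 4 → ℝ)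
    (X : (Fin 4 → ℝ) → Fin 4 → ℝ) (p : Fin 4 → ℝ) (i : Fin 4) :
    covDeriv Γ (fun _ i => if i = 0 then 1 else 0) X p i
      = fderiv ℝ (fun q => X q i) p (Pi.single 0 1)
        + (Γ p i 0 0 * X p 0 + Γ p i 0 1 * X p 1 + Γ p i 0 2 * X p 2 + Γ p i 0 3 * X p 3) := by
  have hY : (fun i : Fin 4 => if i = 0 then (1 : ℝ) else 0) = Pi.single 0 1 := by
    funext i; simp [Pi.single_apply]
  simp only [covDeriv, hY, Fin.sum_univ_four]
  simp [Pi.single_apply]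

/-- In Schwarzschild space-time, the lightlike 3-distributions
Ω± = span(±∂_t + a_S ∂_r, ∂_θ, ∂_φ) — whose sections are the fields X with
X^r = ± a_S X^t — are stable with respect to span(∂_t): ∇_{∂_t} X ∈ Ω± for every
vector field X with values in Ω±. -/
theorem schwarzschild_null_distributions_stable (m : ℝ) (hm : 0 < m)
    (s : ℝ) (hs : s = 1 ∨ s = -1)
    (X : (Fin 4 → ℝ) → Fin 4 → ℝ) (hXs : ContDiff ℝ (⊤ : ℕ∞) X)
    (hX : ∀ q : Fin 4 → ℝ, 2 * m < q 1 → X q 1 = s * (1 - 2 * m / q 1) * X q 0)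
    (p : Fin 4 → ℝ) (hr : 2 * m < p 1) (hθ1 : 0 < p 2) (hθ2 : p 2 < Real.pi) :
    (covDeriv (christoffel (schwMetric m)) (fun _ i => if i = 0 then 1 else 0) X p) 1
      = s * (1 - 2 * m / p 1) *
        (covDeriv (christoffel (schwMetric m)) (fun _ i => if i = 0 then 1 else 0) X p) 0 := by
  have hr0 : 0 < p 1 := lt_trans (by linarith) hr
  have hrne : p 1 ≠ 0 := ne_of_gt hr0
  have ha0 : 0 < 1 - 2 * m / p 1 := by
    rw [sub_pos, div_lt_one hr0]; exact hr
  have ha : (1 - 2 * m / p 1) ≠ 0 := ne_of_gt ha0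
  have hsin : Real.sin (p 2) ≠ 0 := ne_of_gt (Real.sin_pos_of_pos_of_lt_pi hθ1 hθ2)
  have hb : p 1 - 2 * m ≠ 0 := sub_ne_zero.mpr (ne_of_gt hr)
  have h5 : 2 * m / p 1 - 1 ≠ 0 := fun h => ha (by linarith)
  -- inverse metric
  have hinv : (schwMetric m p)⁻¹ = Matrix.diagonal ![(-(1 - 2 * m / p 1))⁻¹, (1 - 2 * m / p 1),
      ((p 1) ^ 2)⁻¹, ((p 1) ^ 2 * Real.sin (p 2) ^ 2)⁻¹] := by
    apply Matrix.inv_eq_right_inv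
    rw [schwMetric]
    have h2 : (-(1 - 2 * m / p 1)) ≠ 0 := neg_ne_zero.mpr ha
    have h3 : (p 1) ^ 2 ≠ 0 := pow_ne_zero 2 hrne
    have h4 : (p 1) ^ 2 * Real.sin (p 2) ^ 2 ≠ 0 := mul_ne_zero h3 (pow_ne_zero 2 hsin)
    ext i j
    fin_cases i <;> fin_cases j <;>
      simp [Matrix.mul_apply, Matrix.diagonal, Matrix.one_apply, Fin.sum_univ_four,
        mul_inv_cancel₀ h2, inv_mul_cancel₀ ha, mul_inv_cancel₀ h3, mul_inv_cancel₀ h4,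
        mul_inv_cancel₀ h5,
        show p 1 ^ 2 * Real.sin (p 2) ^ 2 * ((Real.sin (p 2) ^ 2)⁻¹ * (p 1 ^ 2)⁻¹) = 1 by
          field_simp]
  -- derivative of a_S
  have hga : HasDerivAt (fun x : ℝ => 1 - 2 * m / x) (2 * m / (p 1) ^ 2) (p 1) := by
    have h1 : HasDerivAt (fun x : ℝ => x⁻¹) (-((p 1) ^ 2)⁻¹) (p 1) := hasDerivAt_inv hrne
    have h2 := (h1.const_mul (2 * m)).const_sub 1
    have : (fun x : ℝ => 1 - 2 * m * x⁻¹) = fun x : ℝ => 1 - 2 * m / x := by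
      funext x; rw [div_eq_mul_inv]
    rw [this] at h2
    refine h2.congr_deriv ?_
    ring
  -- pd of metric entries
  have hpd00 : ∀ j : Fin 4, pd (fun q => schwMetric m q 0 0) j p
      = if j = 1 then -(2 * m / (p 1) ^ 2) else 0 := by
    intro j
    have he : (fun q : Fin 4 → ℝ => schwMetric m q 0 0)
        = fun q => (fun x : ℝ => -(1 - 2 * m / x)) (q 1) := by
      funext q; simp [schwMetric]
    rw [he, pd_comp (fun x : ℝ => -(1 - 2 * m / x)) _ _ _ _ hga.neg]
  have hpd11 : ∀ j : Fin 4, pd (fun q => schwMetric m q 1 1) j p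
      = if j = 1 then -(2 * m / (p 1) ^ 2) / (1 - 2 * m / p 1) ^ 2 else 0 := by
    intro j
    have he : (fun q : Fin 4 → ℝ => schwMetric m q 1 1)
        = fun q => (fun x : ℝ => (1 - 2 * m / x)⁻¹) (q 1) := by
      funext q; simp [schwMetric]
    rw [he, pd_comp (fun x : ℝ => (1 - 2 * m / x)⁻¹) _ _ _ _ (hga.inv ha)]
  have hpdoff : ∀ l k j : Fin 4, l ≠ k → pd (fun q => schwMetric m q l k) j p = 0 := by
    intro l k j h
    have he : (fun q : Fin 4 → ℝ => schwMetric m q l k) = fun _ => (0 : ℝ) := by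
      funext q; simp [schwMetric, Matrix.diagonal_apply_ne _ h]
    rw [he, pd_const]
  -- Christoffel symbols
  have hΓ100 : christoffel (schwMetric m) p 1 0 0 = (1 - 2 * m / p 1) * (m / (p 1) ^ 2) := by
    rw [christoffel, Fin.sum_univ_four, hinv,
      hpdoff 1 0 0 (by decide), hpdoff 0 1 0 (by decide), hpd00 1]
    simp [Matrix.diagonal]
    ring
  have hΓ101 : christoffel (schwMetric m) p 1 0 1 = 0 := by
    rw [christoffel, Fin.sum_univ_four, hinv, hpd11 0, hpdoff 0 1 1 (by decide)]
    simp [Matrix.diagonal]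
  have hΓ102 : christoffel (schwMetric m) p 1 0 2 = 0 := by
    rw [christoffel, Fin.sum_univ_four, hinv,
      hpdoff 1 2 0 (by decide), hpdoff 0 1 2 (by decide), hpdoff 0 2 1 (by decide)]
    simp [Matrix.diagonal]
  have hΓ103 : christoffel (schwMetric m) p 1 0 3 = 0 := by
    rw [christoffel, Fin.sum_univ_four, hinv,
      hpdoff 1 3 0 (by decide), hpdoff 0 1 3 (by decide), hpdoff 0 3 1 (by decide)]
    simp [Matrix.diagonal]
  have hΓ000 : christoffel (schwMetric m) p 0 0 0 = 0 := by
    rw [christoffel, Fin.sum_univ_four, hinv, hpd00 0]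
    simp [Matrix.diagonal]
  have hΓ001 : christoffel (schwMetric m) p 0 0 1
      = (m / (p 1) ^ 2) / (1 - 2 * m / p 1) := by
    rw [christoffel, Fin.sum_univ_four, hinv,
      hpdoff 0 1 0 (by decide), hpd00 1]
    simp [Matrix.diagonal]
    rw [eq_div_iff ha]
    generalize hu : 2 * m / p 1 = u at h5 ⊢
    field_simp [h5]
    try ring
  have hΓ002 : christoffel (schwMetric m) p 0 0 2 = 0 := by
    rw [christoffel, Fin.sum_univ_four, hinv,
      hpdoff 0 2 0 (by decide), hpd00 2]
    simp [Matrix.diagonal]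
  have hΓ003 : christoffel (schwMetric m) p 0 0 3 = 0 := by
    rw [christoffel, Fin.sum_univ_four, hinv,
      hpdoff 0 3 0 (by decide), hpd00 3]
    simp [Matrix.diagonal]
  -- the direction vector is Pi.single 0 1
  have hY : (fun i : Fin 4 => if i = 0 then (1 : ℝ) else 0) = Pi.single 0 1 := by
    funext i; simp [Pi.single_apply]
  -- derivative of X components
  have hD : ∀ i : Fin 4, DifferentiableAt ℝ (fun q => X q i) p := by
    intro i
    exact (differentiable_pi.mp (hXs.differentiable (by simp)) i) p
  -- ∂_t X^1 = s a ∂_t X^0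
  have h1 : HasFDerivAt (fun q : Fin 4 → ℝ => s * (1 - 2 * m / q 1))
      (s • ((2 * m / (p 1) ^ 2) • (ContinuousLinearMap.proj 1 : (Fin 4 → ℝ) →L[ℝ] ℝ))) p := by
    have hproj : HasFDerivAt (fun q : Fin 4 → ℝ => q 1)
        (ContinuousLinearMap.proj 1 : (Fin 4 → ℝ) →L[ℝ] ℝ) p :=
      (ContinuousLinearMap.proj 1 : (Fin 4 → ℝ) →L[ℝ] ℝ).hasFDerivAt
    exact (hga.comp_hasFDerivAt p hproj).const_mul s
  have h2 : HasFDerivAt (fun q : Fin 4 → ℝ => X q 0) (fderiv ℝ (fun q => X q 0) p) p :=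
    (hD 0).hasFDerivAt
  have hmul := h1.mul h2
  have hcongr : fderiv ℝ (fun q => X q 1) p
      = fderiv ℝ (fun q : Fin 4 → ℝ => s * (1 - 2 * m / q 1) * X q 0) p := by
    apply Filter.EventuallyEq.fderiv_eq
    have hopen : IsOpen {q : Fin 4 → ℝ | 2 * m < q 1} :=
      isOpen_lt continuous_const (continuous_apply 1)
    filter_upwards [hopen.mem_nhds hr] with q hq using hX q hq
  have hdt1 : fderiv ℝ (fun q => X q 1) p (Pi.single 0 1)
      = s * (1 - 2 * m / p 1) * (fderiv ℝ (fun q => X q 0) p (Pi.single 0 1)) := by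
    rw [hcongr, show (fun q : Fin 4 → ℝ => s * (1 - 2 * m / q 1) * X q 0)
      = ((fun q : Fin 4 → ℝ => s * (1 - 2 * m / q 1)) * fun q => X q 0) from rfl, hmul.fderiv]
    simp [Pi.single_apply]
  -- put everything together
  rw [covDeriv_e0, covDeriv_e0, hΓ100, hΓ101, hΓ102, hΓ103, hΓ000, hΓ001, hΓ002, hΓ003,
    hdt1, hX p hr]
  rcases hs with h | h <;> subst h <;>
    (generalize hu : 2 * m / p 1 = u at ha ⊢; field_simp [ha]; try ring)
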